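/- arXiv:1803.02966 — 2 statements merged into one kernel-verified Lean document; each statement's English description precedes it below -/
import Mathlib

section
/- For every prime p > 3, ∑_{k=1}^{p-1} k³ H_k² ≡ −(59/144) p + 1/6 (mod p²), as rationals with denominators coprime to p. -/
/-!
The closed form of `∑_{k ≤ n} k³ H_k²` (checked by induction) is a polynomial in `n` plus
`H_n` and `H_n²` times polynomials in `n`. At `n = p - 1`, pairing `1/j` with `1/(p - j)` gives
`H_{p-1} = (p/2) ∑ 1/(j(p - j))`, which is `p` times a `p`-integral rational; the coefficient of
`H_{p-1}` is itself divisible by `p`, and the polynomial part is `-(59/144) p + 1/6` modulo `p²`.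
So the difference in the statement is `p²` times a `p`-integral rational.
-/

open Finset

/-- Harmonic number `H n = ∑_{j=1}^n 1/j`. -/
def H (n : ℕ) : ℚ := ∑ j ∈ Finset.Icc 1 n, (1 : ℚ) / j

/-- Generalized harmonic number `H_n^{(α)} = ∑_{i=1}^n 1/i^α`. -/
def Hgen (n α : ℕ) : ℚ := ∑ i ∈ Finset.Icc 1 n, (1 : ℚ) / (i : ℚ) ^ α

/-- `S m = ∑_{r=0}^m C(m+1,r) B_r B_{m-r}`. -/
def S (m : ℕ) : ℚ := ∑ r ∈ Finset.range (m + 1),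
  ((m + 1).choose r : ℚ) * bernoulli r * bernoulli (m - r)

theorem sum_Icc_one_sub_reflect {M : Type*} [AddCommMonoid M] (f : ℕ → M) (n : ℕ) :
    ∑ j ∈ Icc 1 (n - 1), f (n - j) = ∑ j ∈ Icc 1 (n - 1), f j :=
  sum_nbij' (n - ·) (n - ·) (by intro j; simp; omega) (by intro j; simp; omega)
    (by intro j; simp; omega) (by intro j; simp; omega) (by intro j hj; simp)

theorem two_mul_H_pred (n : ℕ) :
    2 * H (n - 1) = n * ∑ j ∈ Icc 1 (n - 1), ((j * (n - j) : ℕ) : ℚ)⁻¹ := by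
  have hsplit : ∀ j ∈ Icc 1 (n - 1),
      (n : ℚ) * ((j * (n - j) : ℕ) : ℚ)⁻¹ = 1 / j + 1 / ((n - j : ℕ) : ℚ) := by
    intro j hj
    rw [mem_Icc] at hj
    have hj0 : (j : ℚ) ≠ 0 := by exact_mod_cast (by omega : j ≠ 0)
    have hnj : ((n - j : ℕ) : ℚ) ≠ 0 := by exact_mod_cast (by omega : n - j ≠ 0)
    have hn : (n : ℚ) = j + ((n - j : ℕ) : ℚ) := by rw [Nat.cast_sub (by omega)]; ring
    rw [Nat.cast_mul, hn]
    field_simp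
    ring
  rw [mul_sum, sum_congr rfl hsplit, sum_add_distrib,
    sum_Icc_one_sub_reflect (fun j => 1 / (j : ℚ)), H]
  ring

theorem H_succ (n : ℕ) : H (n + 1) = H n + 1 / (n + 1) := by
  rw [H, sum_Icc_succ_top (by omega), ← H]
  push_cast
  ring

theorem sum_Icc_cube_mul_H_sq (n : ℕ) :
    ∑ k ∈ Icc 1 n, (k : ℚ) ^ 3 * H k ^ 2
      = (9 * (n : ℚ) ^ 4 - 14 * n ^ 3 + 15 * n ^ 2 - 10 * n) / 288
        - (3 * (n : ℚ) ^ 4 - 2 * n ^ 3 - 3 * n ^ 2 + 2 * n) / 24 * H n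
        + (n : ℚ) ^ 2 * (n + 1) ^ 2 / 4 * H n ^ 2 := by
  induction n with
  | zero => simp [H]
  | succ n ih =>
    rw [sum_Icc_succ_top (by omega), ih, H_succ]
    have : (n : ℚ) + 1 ≠ 0 := by positivity
    push_cast
    field_simp
    ring

-- The ring `ℤ_(p)` of the statement.
def pIntegralRat (p : ℕ) [Fact p.Prime] : Subring ℚ where
  carrier := {q | ¬ p ∣ q.den}
  zero_mem' := by simpa using (Fact.out : p.Prime).not_dvd_one
  one_mem' := by simpa using (Fact.out : p.Prime).not_dvd_one
  add_mem' {q r} hq hr h := by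
    rcases (Fact.out : p.Prime).dvd_mul.mp (h.trans (Rat.add_den_dvd q r)) with h | h
    exacts [hq h, hr h]
  mul_mem' {q r} hq hr h := by
    rcases (Fact.out : p.Prime).dvd_mul.mp (h.trans (Rat.mul_den_dvd q r)) with h | h
    exacts [hq h, hr h]
  neg_mem' {q} hq := by simpa using hq

namespace pIntegralRat

variable {p : ℕ} [Fact p.Prime]

theorem mem_iff {q : ℚ} : q ∈ pIntegralRat p ↔ ¬ p ∣ q.den := Iff.rfl

theorem inv_natCast_mem {n : ℕ} (hn : ¬ p ∣ n) : (n : ℚ)⁻¹ ∈ pIntegralRat p := by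
  rw [mem_iff, Rat.inv_natCast_den]
  split_ifs <;> simp_all

theorem dvd_num_of_eq_mul {q y : ℚ} (k : ℕ) (hy : y ∈ pIntegralRat p) (hq : q = p ^ k * y) :
    (p : ℤ) ^ k ∣ q.num := by
  have hcross : q.num * y.den = q.den * y.num * (p : ℤ) ^ k := by
    have := congrArg (· * (q.den * y.den : ℚ)) hq
    rw [← Rat.num_div_den q, ← Rat.num_div_den y] at this
    field_simp at this
    exact_mod_cast this
  have hcop : IsCoprime ((p : ℤ) ^ k) y.den :=
    ((Nat.prime_iff_prime_int.mp Fact.out).coprime_iff_not_dvd.mpr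
      (by exact_mod_cast hy)).pow_left
  exact hcop.dvd_of_dvd_mul_right ⟨y.num * q.den, by rw [hcross]; ring⟩

end pIntegralRat

theorem sum_inv_mul_sub_mem_pIntegralRat (p : ℕ) [Fact p.Prime] :
    ∑ j ∈ Icc 1 (p - 1), ((j * (p - j) : ℕ) : ℚ)⁻¹ ∈ pIntegralRat p := by
  refine Subring.sum_mem _ fun j hj => pIntegralRat.inv_natCast_mem fun hdvd => ?_
  rw [mem_Icc] at hj
  rcases (Fact.out : p.Prime).dvd_mul.mp hdvd with h | h <;>
    exact absurd (Nat.le_of_dvd (by omega) h) (by omega)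

theorem stmt10 (p : ℕ) (hp : p.Prime) (hp3 : 3 < p) :
    (p : ℤ) ^ 2 ∣ ((∑ k ∈ Finset.Icc 1 (p - 1), (k : ℚ) ^ 3 * H k ^ 2)
      - (-(59 / 144) * (p : ℚ) + 1 / 6)).num := by
  have := Fact.mk hp
  set G := ∑ j ∈ Icc 1 (p - 1), ((j * (p - j) : ℕ) : ℚ)⁻¹
  have hG : G ∈ pIntegralRat p := sum_inv_mul_sub_mem_pIntegralRat p
  have h288 : ((288 : ℕ) : ℚ)⁻¹ ∈ pIntegralRat p := by
    refine pIntegralRat.inv_natCast_mem fun h => ?_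
    rcases hp.dvd_mul.mp (show p ∣ 2 ^ 5 * 3 ^ 2 from h) with h | h <;>
      exact absurd (Nat.le_of_dvd (by norm_num) (hp.dvd_of_dvd_pow h)) (by omega)
  have hH : H (p - 1) = p * G / 2 := by linarith [two_mul_H_pred p]
  -- substituting `H (p - 1) = p G / 2` into the closed form leaves `p²` times this
  refine pIntegralRat.dvd_num_of_eq_mul 2
    (y := ((288 : ℕ) : ℚ)⁻¹ * ((9 * p ^ 2 - 50 * p + 111 : ℤ)
      - (6 * (p - 1) * (p - 2) * (3 * p - 5) : ℤ) * G + (18 * p ^ 2 * (p - 1) ^ 2 : ℤ) * G ^ 2))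
    (by apply_rules [Subring.add_mem, Subring.sub_mem, Subring.mul_mem, Subring.pow_mem,
      intCast_mem]) ?_
  rw [sum_Icc_cube_mul_H_sq, hH, Nat.cast_sub hp.one_le]
  push_cast
  ring
end

section
/- Let p > 3 be a prime and 0 < m < p−1 an odd integer. Then ∑_{k=1}^{p-1} H_k²/k^m ≡ B_{p-2-m} (mod p), as rationals with denominators coprime to p. -/
open Finset

/-!
Everything is reduced to `ZMod p`, where `H k` becomes `h k = ∑_{j ≤ k} j⁻¹` for `k < p`.
Since `h (p - 1) = 0`, the reflection `k ↦ p - k` gives `h (p - k) = h (k - 1)`, and as `m` is odd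
it turns `X = ∑_k h(k)² k⁻ᵐ` into `-∑_k h(k-1)² k⁻ᵐ`. Expanding `h k = h (k - 1) + k⁻¹` in `X`
and adding the two expressions gives `2X = 2 ∑_k h(k-1) k^{-(m+1)} + ∑_k k^{-(m+2)}`, and the last
power sum vanishes because `p - 1 ∤ m + 2`. Finally `h (k - 1) = ∑_{j < k} j^{p-2}` is, by
Faulhaber's formula, a polynomial in `k⁻¹` with coefficients `±B_i`, and summing it against
`k^{-(m+1)}` over the units of `ZMod p` isolates the coefficient `B_{p-2-m}`.
-/

lemma Icc_one_sub_one_eq_Ico (n : ℕ) : Icc 1 (n - 1) = Ico 1 n := by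
  ext
  simp only [mem_Icc, mem_Ico]
  omega

lemma sum_Ico_one_reflect {M : Type*} [AddCommMonoid M] (f : ℕ → M) (n : ℕ) :
    ∑ k ∈ Ico 1 n, f (n - k) = ∑ k ∈ Ico 1 n, f k := by
  simpa using sum_Ico_reflect f 1 (Nat.le_succ n)

lemma not_dvd_of_mem_Ico {p k : ℕ} (hk : k ∈ Ico 1 p) : ¬ p ∣ k :=
  Nat.not_dvd_of_pos_of_lt (mem_Ico.mp hk).1 (mem_Ico.mp hk).2

section pIntegral

variable {p : ℕ} [hp : Fact p.Prime]

variable (p) in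
def pIntegral : Subring ℚ where
  carrier := {q | ¬ p ∣ q.den}
  mul_mem' {q r} hq hr h := (hp.out.dvd_mul.mp (h.trans (Rat.mul_den_dvd q r))).elim hq hr
  one_mem' := by simp [hp.out.ne_one]
  add_mem' {q r} hq hr h := (hp.out.dvd_mul.mp (h.trans (Rat.add_den_dvd q r))).elim hq hr
  zero_mem' := by simp [hp.out.ne_one]
  neg_mem' := by simp

lemma mem_pIntegral {q : ℚ} : q ∈ pIntegral p ↔ ¬ p ∣ q.den := Iff.rfl

lemma inv_natCast_mem_pIntegral {n : ℕ} (hn : ¬ p ∣ n) : (n : ℚ)⁻¹ ∈ pIntegral p := by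
  rw [mem_pIntegral, Rat.inv_natCast_den]
  split_ifs <;> simp_all

lemma bernoulli_mem_pIntegral {n : ℕ} (hn : n < p - 1) : bernoulli n ∈ pIntegral p := by
  induction n using Nat.strong_induction_on with
  | _ n ih =>
    rcases n.eq_zero_or_pos with rfl | hn0
    · simp [(pIntegral p).one_mem]
    -- solve `sum_bernoulli (n + 1)` for `bernoulli n`, whose coefficient `n + 1 < p` is a unit
    have hrec := sum_bernoulli (n + 1)
    rw [if_neg (by omega), sum_range_succ, Nat.choose_succ_self_right] at hrec
    have hB : bernoulli n = -(∑ k ∈ range n, ((n + 1).choose k : ℚ) * bernoulli k) *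
        ((n + 1 : ℕ) : ℚ)⁻¹ := by
      rw [eq_mul_inv_iff_mul_eq₀ (by positivity)]
      push_cast at hrec ⊢
      linear_combination hrec
    rw [hB]
    refine mul_mem (neg_mem (sum_mem fun k hk => mul_mem (natCast_mem _ _) ?_))
      (inv_natCast_mem_pIntegral (Nat.not_dvd_of_pos_of_lt (by omega) (by omega)))
    have hkn := mem_range.mp hk
    exact ih k hkn (by omega)

lemma natCast_den_ne_zero {q : ℚ} (hq : q ∈ pIntegral p) : (q.den : ZMod p) ≠ 0 := by
  rwa [Ne, ZMod.natCast_eq_zero_iff]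

lemma cast_add_of_mem_pIntegral {q r : ℚ} (hq : q ∈ pIntegral p) (hr : r ∈ pIntegral p) :
    ((q + r : ℚ) : ZMod p) = q + r :=
  Rat.cast_add_of_ne_zero (natCast_den_ne_zero hq) (natCast_den_ne_zero hr)

lemma cast_sub_of_mem_pIntegral {q r : ℚ} (hq : q ∈ pIntegral p) (hr : r ∈ pIntegral p) :
    ((q - r : ℚ) : ZMod p) = q - r :=
  Rat.cast_sub_of_ne_zero (natCast_den_ne_zero hq) (natCast_den_ne_zero hr)

lemma cast_mul_of_mem_pIntegral {q r : ℚ} (hq : q ∈ pIntegral p) (hr : r ∈ pIntegral p) :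
    ((q * r : ℚ) : ZMod p) = q * r :=
  Rat.cast_mul_of_ne_zero (natCast_den_ne_zero hq) (natCast_den_ne_zero hr)

lemma cast_pow_of_mem_pIntegral {q : ℚ} (hq : q ∈ pIntegral p) (n : ℕ) :
    ((q ^ n : ℚ) : ZMod p) = (q : ZMod p) ^ n := by
  induction n with
  | zero => simp
  | succ n ih => rw [pow_succ, cast_mul_of_mem_pIntegral (pow_mem hq n) hq, ih, pow_succ]

lemma cast_sum_of_mem_pIntegral {ι : Type*} {s : Finset ι} {f : ι → ℚ}
    (hf : ∀ i ∈ s, f i ∈ pIntegral p) :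
    ((∑ i ∈ s, f i : ℚ) : ZMod p) = ∑ i ∈ s, (f i : ZMod p) := by
  classical
  induction s using Finset.induction_on with
  | empty => simp
  | insert i s hi ih =>
    rw [sum_insert hi, sum_insert hi, cast_add_of_mem_pIntegral (hf i (mem_insert_self i s))
      (sum_mem fun j hj => hf j (mem_insert_of_mem hj)), ih fun j hj => hf j (mem_insert_of_mem hj)]

lemma dvd_num_of_cast_eq_zero {q : ℚ} (hq : q ∈ pIntegral p) (h : (q : ZMod p) = 0) :
    (p : ℤ) ∣ q.num := by
  rw [Rat.cast_def, div_eq_zero_iff, or_iff_left (natCast_den_ne_zero hq)] at h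
  exact (ZMod.intCast_zmod_eq_zero_iff_dvd _ p).mp h

end pIntegral

section harmonicMod

variable {p : ℕ} [Fact p.Prime]

lemma natCast_ne_zero_of_mem_Ico {k : ℕ} (hk : k ∈ Ico 1 p) : (k : ZMod p) ≠ 0 := by
  rw [Ne, ZMod.natCast_eq_zero_iff]
  exact not_dvd_of_mem_Ico hk

lemma natCast_sub_self {k : ℕ} (hk : k ≤ p) : ((p - k : ℕ) : ZMod p) = -k := by
  rw [Nat.cast_sub hk, ZMod.natCast_self, zero_sub]

lemma sum_Ico_one_eq_sum_units {M : Type*} [AddCommMonoid M] (f : ZMod p → M) :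
    ∑ k ∈ Ico 1 p, f k = ∑ u : (ZMod p)ˣ, f u :=
  sum_bij' (fun k hk => Units.mk0 (k : ZMod p) (natCast_ne_zero_of_mem_Ico hk))
    (fun u _ => (u : ZMod p).val) (fun _ _ => mem_univ _)
    (fun u _ => mem_Ico.mpr ⟨ZMod.val_pos.mpr u.ne_zero, ZMod.val_lt _⟩)
    (fun k hk => by simp [ZMod.val_cast_of_lt (mem_Ico.mp hk).2])
    (fun u _ => Units.ext (ZMod.natCast_zmod_val _)) (fun _ _ => rfl)

lemma sum_Ico_inv_pow (n : ℕ) :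
    ∑ k ∈ Ico 1 p, ((k : ZMod p)⁻¹) ^ n = if p - 1 ∣ n then -1 else 0 := by
  classical
  have hunits := FiniteField.sum_pow_units (ZMod p) n
  rw [ZMod.card] at hunits
  rw [sum_Ico_one_eq_sum_units (fun x => x⁻¹ ^ n), ← hunits]
  simp_rw [← Units.val_inv_eq_inv_val]
  exact Equiv.sum_comp (Equiv.inv _) (fun u : (ZMod p)ˣ => (u : ZMod p) ^ n)

lemma natCast_pow_sub_eq_inv_pow {k : ℕ} (hk : k ∈ Ico 1 p) {i : ℕ} (hi : i ≤ p - 1) :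
    (k : ZMod p) ^ (p - 1 - i) = ((k : ZMod p)⁻¹) ^ i := by
  rw [inv_pow]
  refine eq_inv_of_mul_eq_one_left ?_
  rw [← pow_add, Nat.sub_add_cancel hi,
    ZMod.pow_card_sub_one_eq_one (natCast_ne_zero_of_mem_Ico hk)]

lemma natCast_choose_pred (i : ℕ) (hi : i ≤ p - 1) :
    (((p - 1).choose i : ℕ) : ZMod p) = (-1) ^ i := by
  induction i with
  | zero => simp
  | succ i ih =>
    have hpascal : p.choose (i + 1) = (p - 1).choose i + (p - 1).choose (i + 1) := by
      conv_lhs => rw [← Nat.sub_add_cancel (Fact.out : p.Prime).one_le]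
      exact Nat.choose_succ_succ _ _
    have hdvd : ((p.choose (i + 1) : ℕ) : ZMod p) = 0 := (ZMod.natCast_eq_zero_iff _ _).mpr
      ((Fact.out : p.Prime).dvd_choose_self i.succ_ne_zero (by omega))
    rw [hpascal, Nat.cast_add, ih (by omega)] at hdvd
    linear_combination hdvd

variable (p) in
def harmonicMod (n : ℕ) : ZMod p := ∑ j ∈ Icc 1 n, (j : ZMod p)⁻¹

lemma harmonicMod_succ (n : ℕ) :
    harmonicMod p (n + 1) = harmonicMod p n + ((n + 1 : ℕ) : ZMod p)⁻¹ :=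
  sum_Icc_succ_top (by omega) _

lemma harmonicMod_pred_self (hp : 2 < p) : harmonicMod p (p - 1) = 0 := by
  have hsum := sum_Ico_inv_pow (p := p) 1
  rw [if_neg (Nat.not_dvd_of_pos_of_lt one_pos (by omega)), ← Icc_one_sub_one_eq_Ico] at hsum
  simpa [harmonicMod] using hsum

lemma harmonicMod_reflect (hp : 2 < p) {k : ℕ} (hk : k < p) :
    harmonicMod p (p - 1 - k) = harmonicMod p k := by
  induction k with
  | zero => rw [Nat.sub_zero, harmonicMod_pred_self hp]; simp [harmonicMod]
  | succ k ih =>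
    have hsplit := harmonicMod_succ (p := p) (p - 1 - (k + 1))
    rw [show p - 1 - (k + 1) + 1 = p - (k + 1) by omega, natCast_sub_self hk.le, inv_neg,
      ← sub_eq_add_neg, show p - (k + 1) = p - 1 - k by omega, ih (by omega),
      eq_sub_iff_add_eq] at hsplit
    rw [harmonicMod_succ, hsplit]

lemma harmonicMod_eq_sum_range (n : ℕ) :
    harmonicMod p n = ∑ j ∈ range (n + 1), (j : ZMod p)⁻¹ := by
  induction n with
  | zero => simp [harmonicMod]
  | succ n ih => rw [harmonicMod_succ, ih, sum_range_succ _ (n + 1)]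

lemma harmonicMod_pred_eq_sum_bernoulli (hp : 2 < p) {k : ℕ} (hk : k ∈ Ico 1 p) :
    harmonicMod p (k - 1) =
      -∑ i ∈ range (p - 1), (-1) ^ i * (bernoulli i : ZMod p) * ((k : ZMod p)⁻¹) ^ i := by
  have hfaulhaber := sum_range_pow k (p - 2)
  have hden : ((p - 2 : ℕ) : ℚ) + 1 = ((p - 1 : ℕ) : ℚ) := by norm_cast; omega
  rw [show p - 2 + 1 = p - 1 by omega, hden] at hfaulhaber
  have hterm : ∀ i ∈ range (p - 1),
      bernoulli i * ((p - 1).choose i : ℚ) * (k : ℚ) ^ (p - 1 - i) / ((p - 1 : ℕ) : ℚ)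
          ∈ pIntegral p ∧
        ((bernoulli i * ((p - 1).choose i : ℚ) * (k : ℚ) ^ (p - 1 - i) / ((p - 1 : ℕ) : ℚ) : ℚ)
          : ZMod p) = -((-1) ^ i * (bernoulli i : ZMod p) * ((k : ZMod p)⁻¹) ^ i) := by
    intro i hi
    have hip := mem_range.mp hi
    have hB := bernoulli_mem_pIntegral (p := p) hip
    have hC := natCast_mem (pIntegral p) ((p - 1).choose i)
    have hK := pow_mem (natCast_mem (pIntegral p) k) (p - 1 - i)
    have hinv := inv_natCast_mem_pIntegral (p := p) (n := p - 1)
      (Nat.not_dvd_of_pos_of_lt (by omega) (by omega))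
    rw [div_eq_mul_inv]
    refine ⟨mul_mem (mul_mem (mul_mem hB hC) hK) hinv, ?_⟩
    rw [cast_mul_of_mem_pIntegral (mul_mem (mul_mem hB hC) hK) hinv,
      cast_mul_of_mem_pIntegral (mul_mem hB hC) hK, cast_mul_of_mem_pIntegral hB hC,
      cast_pow_of_mem_pIntegral (natCast_mem _ k), Rat.cast_inv_nat, Rat.cast_natCast,
      Rat.cast_natCast, natCast_choose_pred i (by omega),
      natCast_pow_sub_eq_inv_pow hk (by omega), natCast_sub_self (by omega)]
    ring
  calc harmonicMod p (k - 1) = ∑ j ∈ range k, (j : ZMod p) ^ (p - 2) := by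
        rw [harmonicMod_eq_sum_range, Nat.sub_add_cancel (mem_Ico.mp hk).1]
        refine sum_congr rfl fun j hj => ?_
        rcases j.eq_zero_or_pos with rfl | hj0
        · simp [zero_pow (by omega : p - 2 ≠ 0)]
        · have hjp : j ∈ Ico 1 p := mem_Ico.mpr ⟨hj0, (mem_range.mp hj).trans (mem_Ico.mp hk).2⟩
          rw [show p - 2 = p - 1 - 1 by omega, natCast_pow_sub_eq_inv_pow hjp (by omega), pow_one]
    _ = ((∑ j ∈ range k, (j : ℚ) ^ (p - 2) : ℚ) : ZMod p) := by norm_cast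
    _ = _ := by
        rw [hfaulhaber, cast_sum_of_mem_pIntegral fun i hi => (hterm i hi).1,
          sum_congr rfl fun i hi => (hterm i hi).2, sum_neg_distrib]

lemma sum_harmonicMod_pred_mul_inv_pow (hp : 2 < p) {n : ℕ} (hn0 : 0 < n) (hn : n ≤ p - 1) :
    ∑ k ∈ Ico 1 p, harmonicMod p (k - 1) * ((k : ZMod p)⁻¹) ^ n =
      (-1) ^ (p - 1 - n) * (bernoulli (p - 1 - n) : ZMod p) := by
  have hdvd : ∀ i ∈ range (p - 1), p - 1 ∣ i + n ↔ i = p - 1 - n := fun i hi =>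
    ⟨fun h => by
      have := Nat.eq_of_dvd_of_lt_two_mul (by omega) h (by have := mem_range.mp hi; omega)
      omega,
    fun _ => ⟨1, by omega⟩⟩
  calc ∑ k ∈ Ico 1 p, harmonicMod p (k - 1) * ((k : ZMod p)⁻¹) ^ n
      = -∑ i ∈ range (p - 1), (-1) ^ i * (bernoulli i : ZMod p) *
          ∑ k ∈ Ico 1 p, ((k : ZMod p)⁻¹) ^ (i + n) := by
        simp_rw [mul_sum]
        rw [sum_comm, ← sum_neg_distrib]
        refine sum_congr rfl fun k hk => ?_
        rw [harmonicMod_pred_eq_sum_bernoulli hp hk, neg_mul, sum_mul]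
        simp_rw [pow_add, mul_assoc]
    _ = -∑ i ∈ range (p - 1), (-1) ^ i * (bernoulli i : ZMod p) *
          if i = p - 1 - n then -1 else 0 := by
        simp_rw [sum_Ico_inv_pow]
        refine congrArg _ (sum_congr rfl fun i hi => ?_)
        rw [if_congr (hdvd i hi) rfl rfl]
    _ = _ := by
        rw [sum_eq_single_of_mem (p - 1 - n) (mem_range.mpr (by omega))
          fun i _ hi => by rw [if_neg hi, mul_zero], if_pos rfl]
        ring

lemma sum_harmonicMod_sq_mul_inv_pow (hp : 2 < p) {m : ℕ} (hm : Odd m) (hmp : m < p - 1) :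
    ∑ k ∈ Ico 1 p, harmonicMod p k ^ 2 * ((k : ZMod p)⁻¹) ^ m =
      (bernoulli (p - 2 - m) : ZMod p) := by
  have ⟨a, ha⟩ := hm
  obtain ⟨b, hb⟩ := (Fact.out : p.Prime).odd_of_ne_two (by omega)
  have hexpand : ∑ k ∈ Ico 1 p, harmonicMod p k ^ 2 * ((k : ZMod p)⁻¹) ^ m =
      ∑ k ∈ Ico 1 p, (harmonicMod p (k - 1) + (k : ZMod p)⁻¹) ^ 2 * ((k : ZMod p)⁻¹) ^ m := by
    refine sum_congr rfl fun k hk => ?_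
    have hsucc := harmonicMod_succ (p := p) (k - 1)
    rw [Nat.sub_add_cancel (mem_Ico.mp hk).1] at hsucc
    rw [hsucc]
  have hreflect : ∑ k ∈ Ico 1 p, harmonicMod p k ^ 2 * ((k : ZMod p)⁻¹) ^ m =
      -∑ k ∈ Ico 1 p, harmonicMod p (k - 1) ^ 2 * ((k : ZMod p)⁻¹) ^ m := by
    rw [← sum_neg_distrib, ← sum_Ico_one_reflect]
    refine sum_congr rfl fun k hk => ?_
    obtain ⟨hk1, hkp⟩ := mem_Ico.mp hk
    rw [show p - k = p - 1 - (k - 1) by omega, harmonicMod_reflect hp (by omega),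
      show p - 1 - (k - 1) = p - k by omega, natCast_sub_self hkp.le, inv_neg, hm.neg_pow,
      mul_neg]
  have hsum : ∑ k ∈ Ico 1 p, (harmonicMod p (k - 1) + (k : ZMod p)⁻¹) ^ 2 * ((k : ZMod p)⁻¹) ^ m -
      ∑ k ∈ Ico 1 p, harmonicMod p (k - 1) ^ 2 * ((k : ZMod p)⁻¹) ^ m =
      2 * ∑ k ∈ Ico 1 p, harmonicMod p (k - 1) * ((k : ZMod p)⁻¹) ^ (m + 1) +
        ∑ k ∈ Ico 1 p, ((k : ZMod p)⁻¹) ^ (m + 2) := by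
    rw [mul_sum, ← sum_add_distrib, ← sum_sub_distrib]
    exact sum_congr rfl fun k _ => by ring
  have hvanish : ∑ k ∈ Ico 1 p, ((k : ZMod p)⁻¹) ^ (m + 2) = 0 := by
    rw [sum_Ico_inv_pow, if_neg]
    intro h
    have := Nat.eq_of_dvd_of_lt_two_mul (by omega) h (by omega)
    omega
  have h2 : (2 : ZMod p) ≠ 0 := by
    exact_mod_cast natCast_ne_zero_of_mem_Ico (mem_Ico.mpr ⟨by omega, hp⟩)
  have hhalf : ∑ k ∈ Ico 1 p, harmonicMod p k ^ 2 * ((k : ZMod p)⁻¹) ^ m =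
      ∑ k ∈ Ico 1 p, harmonicMod p (k - 1) * ((k : ZMod p)⁻¹) ^ (m + 1) :=
    mul_left_cancel₀ h2 (by linear_combination hexpand + hreflect + hsum + hvanish)
  rw [hhalf, sum_harmonicMod_pred_mul_inv_pow hp (by omega) (by omega),
    show p - 1 - (m + 1) = p - 2 - m by omega,
    (show Even (p - 2 - m) from ⟨b - a - 1, by omega⟩).neg_one_pow, one_mul]

lemma one_div_natCast_mem_pIntegral {j k : ℕ} (hj : j ∈ Icc 1 k) (hk : k < p) :
    (1 : ℚ) / j ∈ pIntegral p := by
  rw [one_div]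
  exact inv_natCast_mem_pIntegral (not_dvd_of_mem_Ico (by simp at hj ⊢; omega))

lemma H_mem_pIntegral {k : ℕ} (hk : k < p) : H k ∈ pIntegral p :=
  sum_mem fun _ hj => one_div_natCast_mem_pIntegral hj hk

lemma cast_H {k : ℕ} (hk : k < p) : (H k : ZMod p) = harmonicMod p k := by
  rw [H, cast_sum_of_mem_pIntegral fun _ hj => one_div_natCast_mem_pIntegral hj hk]
  exact sum_congr rfl fun j _ => by rw [one_div, Rat.cast_inv_nat]

end harmonicMod

theorem stmt16_general (p m : ℕ) (hp : p.Prime) (hmp : m < p - 1)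
    (hodd : Odd m) :
    (p : ℤ) ∣ ((∑ k ∈ Finset.Icc 1 (p - 1), H k ^ 2 / (k : ℚ) ^ m)
      - bernoulli (p - 2 - m)).num := by
  have : Fact p.Prime := ⟨hp⟩
  have hp2 : 2 < p := by have := hodd.pos; omega
  have hterm : ∀ k ∈ Ico 1 p, H k ^ 2 / (k : ℚ) ^ m ∈ pIntegral p ∧
      ((H k ^ 2 / (k : ℚ) ^ m : ℚ) : ZMod p) = harmonicMod p k ^ 2 * ((k : ZMod p)⁻¹) ^ m := by
    intro k hk
    have hH := H_mem_pIntegral (mem_Ico.mp hk).2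
    have hinv := inv_natCast_mem_pIntegral (not_dvd_of_mem_Ico hk)
    rw [div_eq_mul_inv, ← inv_pow]
    refine ⟨mul_mem (pow_mem hH 2) (pow_mem hinv m), ?_⟩
    rw [cast_mul_of_mem_pIntegral (pow_mem hH 2) (pow_mem hinv m), cast_pow_of_mem_pIntegral hH,
      cast_pow_of_mem_pIntegral hinv, cast_H (mem_Ico.mp hk).2, Rat.cast_inv_nat]
  have hX := sum_mem fun k hk => (hterm k hk).1
  have hB := bernoulli_mem_pIntegral (p := p) (n := p - 2 - m) (by omega)
  rw [Icc_one_sub_one_eq_Ico]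
  refine dvd_num_of_cast_eq_zero (sub_mem hX hB) ?_
  rw [cast_sub_of_mem_pIntegral hX hB, cast_sum_of_mem_pIntegral fun k hk => (hterm k hk).1,
    sum_congr rfl fun k hk => (hterm k hk).2, sum_harmonicMod_sq_mul_inv_pow hp2 hodd hmp,
    sub_self]

theorem stmt16 (p m : ℕ) (hp : p.Prime) (hp3 : 3 < p) (hm : 0 < m) (hmp : m < p - 1)
    (hodd : Odd m) :
    (p : ℤ) ∣ ((∑ k ∈ Finset.Icc 1 (p - 1), H k ^ 2 / (k : ℚ) ^ m)
      - bernoulli (p - 2 - m)).num :=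
  stmt16_general p m hp hmp hodd
end
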